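/- Let {x^k} be generated by Algorithm 1. If the sequence {x^k} has at least one accumulation point, then lim_{k→∞} min_{0 ≤ l ≤ k} G(x^l) = 0. -/

import Mathlib

open scoped RealInnerProductSpace

/-- The Frank–Wolfe gap `G(x) = sup_{v ∈ s} (⟪∇f(x), x − v⟫ + g(x) − g(v))`. -/
noncomputable def FWgap {E : Type*} [NormedAddCommGroup E] [InnerProductSpace ℝ E] [CompleteSpace E]
    (f g : E → ℝ) (s : Set E) (x : E) : ℝ :=
  ⨆ v : s, (⟪gradient f x, x - (v : E)⟫ + g x - g (v : E))

/-!
The reference values `Fs k` drop by at least `p σ β ^ ik k G(x k)` per step and stay above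
`F(x k) ≥ inf_s F`, so `β ^ ik k G(x k) → 0`. If all gaps stayed above `ε`, the accepted steps would
vanish. Near an accumulation point `x*` the directions are bounded (supercoercivity of `g` against
the bounded gradients), and the uniform first-order expansion of `f` around `x*` together with the
convexity of `g` shows that every short enough step from a point close to `x*` passes the Armijo
test. Yet the step `β ^ (ik k - 1)` was rejected there.
-/

open Filter Metric Set Topology

lemma tendsto_zero_of_succ_le_sub {u c : ℕ → ℝ} (hc : ∀ k, 0 ≤ c k) (hu : BddBelow (range u))
    (h : ∀ k, u (k + 1) ≤ u k - c k) : Tendsto c atTop (𝓝 0) := by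
  have hlim := tendsto_atTop_ciInf (antitone_nat_of_succ_le fun k => by linarith [h k, hc k]) hu
  have hdiff : Tendsto (fun k => u k - u (k + 1)) atTop (𝓝 0) := by
    simpa using hlim.sub (hlim.comp (tendsto_add_atTop_nat 1))
  exact squeeze_zero hc (fun k => by linarith [h k]) hdiff

section NonmonotoneReference

variable {a c Fs ps : ℕ → ℝ} {p : ℝ}

lemma le_of_nonmonotone_reference (hc : ∀ k, 0 ≤ c k) (hdesc : ∀ k, a (k + 1) ≤ Fs k - c k)
    (hF0 : Fs 0 = a 0) (hps : ∀ k, ps (k + 1) ≤ 1)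
    (hFsucc : ∀ k, Fs (k + 1) = ps (k + 1) * a (k + 1) + (1 - ps (k + 1)) * Fs k) :
    ∀ k, a k ≤ Fs k
  | 0 => hF0.ge
  | k + 1 => by
    rw [hFsucc k]
    nlinarith [hdesc k, hc k, hps k]

lemma tendsto_zero_of_nonmonotone_reference (hp : 0 < p) (hc : ∀ k, 0 ≤ c k)
    (ha : BddBelow (range a)) (hdesc : ∀ k, a (k + 1) ≤ Fs k - c k) (hF0 : Fs 0 = a 0)
    (hps : ∀ k, ps (k + 1) ∈ Icc p 1)
    (hFsucc : ∀ k, Fs (k + 1) = ps (k + 1) * a (k + 1) + (1 - ps (k + 1)) * Fs k) :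
    Tendsto c atTop (𝓝 0) := by
  have hle := le_of_nonmonotone_reference hc hdesc hF0 (fun k => (hps k).2) hFsucc
  obtain ⟨m, hm⟩ := ha
  have hFs : BddBelow (range Fs) :=
    ⟨m, forall_mem_range.2 fun k => (hm (mem_range_self k)).trans (hle k)⟩
  have hpc : Tendsto (fun k => p * c k) atTop (𝓝 0) := by
    refine tendsto_zero_of_succ_le_sub (fun k => mul_nonneg hp.le (hc k)) hFs fun k => ?_
    rw [hFsucc k]
    nlinarith [hdesc k, hc k, (hps k).1]
  simpa [hp.ne'] using hpc.const_mul p⁻¹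

end NonmonotoneReference

lemma tendsto_inf'_range_nhds_zero {a : ℕ → ℝ} (ha : ∀ k, 0 ≤ a k)
    (h : ∀ ε > 0, ∃ k, a k < ε) :
    Tendsto (fun k => (Finset.range (k + 1)).inf' Finset.nonempty_range_add_one a) atTop
      (𝓝 0) := by
  refine tendsto_order.2 ⟨fun ε hε => Eventually.of_forall fun k =>
    hε.trans_le (Finset.le_inf' _ _ fun l _ => ha l), fun ε hε => ?_⟩
  obtain ⟨k₀, hk₀⟩ := h ε hε
  filter_upwards [eventually_ge_atTop k₀] with k hk
  exact (Finset.inf'_le _ (Finset.mem_range.2 (Nat.lt_succ_of_le hk))).trans_lt hk₀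

lemma Convex.mem_of_succ_eq_add_smul_sub {E : Type*} [AddCommGroup E] [Module ℝ E] {s : Set E}
    (hs : Convex ℝ s) {x v : ℕ → E} {t : ℕ → ℝ} (hx0 : x 0 ∈ s) (hv : ∀ k, v k ∈ s)
    (ht : ∀ k, t k ∈ Icc 0 1) (hsucc : ∀ k, x (k + 1) = x k + t k • (v k - x k)) :
    ∀ k, x k ∈ s
  | 0 => hx0
  | k + 1 => hsucc k ▸ hs.add_smul_sub_mem (hs.mem_of_succ_eq_add_smul_sub hx0 hv ht hsucc k)
      (hv k) (ht k)

lemma ContDiffOn.exists_ball_norm_sub_sub_fderiv_le {E F : Type*} [NormedAddCommGroup E]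
    [NormedSpace ℝ E] [NormedAddCommGroup F] [NormedSpace ℝ F] {f : E → F} {u : Set E}
    (hf : ContDiffOn ℝ 1 f u) (hu : IsOpen u) {x₀ : E} (hx₀ : x₀ ∈ u) {η : ℝ} (hη : 0 < η) :
    ∃ δ > 0, ∀ x ∈ ball x₀ δ, ∀ y ∈ ball x₀ δ,
      ‖f y - f x - fderiv ℝ f x (y - x)‖ ≤ η * ‖y - x‖ := by
  obtain ⟨δ₁, hδ₁, hball⟩ := Metric.isOpen_iff.1 hu x₀ hx₀
  have hcont := (hf.continuousOn_fderiv_of_isOpen hu le_rfl).continuousAt (hu.mem_nhds hx₀)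
  obtain ⟨δ₂, hδ₂, hclose⟩ := Metric.continuousAt_iff.1 hcont (η / 2) (half_pos hη)
  refine ⟨min δ₁ δ₂, lt_min hδ₁ hδ₂, fun x hx y hy => ?_⟩
  have hsub : ball x₀ (min δ₁ δ₂) ⊆ u := (ball_subset_ball (min_le_left _ _)).trans hball
  have hnear : ∀ z ∈ ball x₀ (min δ₁ δ₂), ‖fderiv ℝ f z - fderiv ℝ f x₀‖ < η / 2 := fun z hz =>
    dist_eq_norm (fderiv ℝ f z) _ ▸ hclose (lt_of_lt_of_le (mem_ball.1 hz) (min_le_right _ _))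
  refine (convex_ball x₀ _).norm_image_sub_le_of_norm_fderiv_le'
    (fun z hz => (hf.differentiableOn one_ne_zero).differentiableAt (hu.mem_nhds (hsub hz)))
    (fun z hz => ?_) hx hy
  calc ‖fderiv ℝ f z - fderiv ℝ f x‖
      = ‖(fderiv ℝ f z - fderiv ℝ f x₀) - (fderiv ℝ f x - fderiv ℝ f x₀)‖ := by abel_nf
    _ ≤ ‖fderiv ℝ f z - fderiv ℝ f x₀‖ + ‖fderiv ℝ f x - fderiv ℝ f x₀‖ := norm_sub_le _ _
    _ ≤ η := by linarith [hnear z hz, hnear x hx]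

def SupercoerciveOn {E : Type*} [Norm E] (g : E → ℝ) (s : Set E) : Prop :=
  ∀ M : ℝ, ∃ R : ℝ, ∀ z ∈ s, R ≤ ‖z‖ → M ≤ g z / ‖z‖

section FrankWolfeGap

variable {E : Type*} [NormedAddCommGroup E] [InnerProductSpace ℝ E] {s : Set E} {g : E → ℝ}

lemma SupercoerciveOn.exists_norm_le_of_isMinOn (hg : SupercoerciveOn g s) {w₀ : E}
    (hw₀ : w₀ ∈ s) (A : ℝ) :
    ∃ B, ∀ a v, ‖a‖ ≤ A → v ∈ s → IsMinOn (fun w => ⟪a, w⟫ + g w) s v → ‖v‖ ≤ B := by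
  obtain ⟨R, hR⟩ := hg (A + 1)
  refine ⟨max (max R 1) (A * ‖w₀‖ + g w₀), fun a v ha hv hmin => ?_⟩
  rcases le_or_gt ‖v‖ (max R 1) with hsmall | hlarge
  · exact hsmall.trans (le_max_left _ _)
  have hv1 : 1 ≤ ‖v‖ := (le_max_right _ _).trans hlarge.le
  have hgv : (A + 1) * ‖v‖ ≤ g v :=
    (le_div_iff₀ (by linarith)).1 (hR v hv ((le_max_left _ _).trans hlarge.le))
  have hav : -(A * ‖v‖) ≤ ⟪a, v⟫ := by
    nlinarith [neg_abs_le ⟪a, v⟫, abs_real_inner_le_norm a v, norm_nonneg v]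
  have haw : ⟪a, w₀⟫ ≤ A * ‖w₀‖ :=
    (real_inner_le_norm a w₀).trans (mul_le_mul_of_nonneg_right ha (norm_nonneg _))
  have := isMinOn_iff.1 hmin w₀ hw₀
  exact le_max_of_le_right (by linarith)

variable [CompleteSpace E] {f : E → ℝ}

lemma FWgap_eq_of_isMinOn {x v : E} (hv : v ∈ s)
    (hmin : IsMinOn (fun w => ⟪gradient f x, w⟫ + g w) s v) :
    FWgap f g s x = ⟪gradient f x, x - v⟫ + g x - g v := by
  have : Nonempty s := ⟨⟨v, hv⟩⟩
  have hle : ∀ w : s, ⟪gradient f x, x - (w : E)⟫ + g x - g w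
      ≤ ⟪gradient f x, x - v⟫ + g x - g v := fun w => by
    have := isMinOn_iff.1 hmin w w.2
    rw [inner_sub_right, inner_sub_right]
    linarith
  exact le_antisymm (ciSup_le hle) (le_ciSup ⟨_, forall_mem_range.2 hle⟩ ⟨v, hv⟩)

lemma FWgap_nonneg_of_isMinOn {x v : E} (hx : x ∈ s) (hv : v ∈ s)
    (hmin : IsMinOn (fun w => ⟪gradient f x, w⟫ + g w) s v) : 0 ≤ FWgap f g s x := by
  have := isMinOn_iff.1 hmin x hx
  rw [FWgap_eq_of_isMinOn hv hmin, inner_sub_right]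
  linarith

lemma add_smul_sub_le_sub_mul_FWgap {x v : E} {τ : ℝ} (hg : ConvexOn ℝ s g) (hx : x ∈ s)
    (hv : v ∈ s) (hmin : IsMinOn (fun w => ⟪gradient f x, w⟫ + g w) s v) (hτ0 : 0 ≤ τ)
    (hτ1 : τ ≤ 1) :
    f (x + τ • (v - x)) + g (x + τ • (v - x)) ≤ f x + g x - τ * FWgap f g s x
      + (f (x + τ • (v - x)) - f x - fderiv ℝ f x (τ • (v - x))) := by
  have hgy : g (x + τ • (v - x)) ≤ (1 - τ) * g x + τ * g v := by
    rw [show x + τ • (v - x) = (1 - τ) • x + τ • v by module]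
    exact hg.2 hx hv (by linarith) hτ0 (by ring)
  have hlin : fderiv ℝ f x (τ • (v - x)) = τ * ⟪gradient f x, v - x⟫ := by
    rw [map_smul, smul_eq_mul, inner_gradient_left]
  rw [FWgap_eq_of_isMinOn hv hmin, hlin, inner_sub_right, inner_sub_right]
  nlinarith

end FrankWolfeGap

section LineSearch

variable {E : Type*} [NormedAddCommGroup E] [InnerProductSpace ℝ E] [CompleteSpace E]
  {s u : Set E} {f g : E → ℝ}

lemma exists_armijo_of_le_FWgap (hg : ConvexOn ℝ s g) (hf : ContDiffOn ℝ 1 f u) (hu : IsOpen u)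
    {x₀ : E} (hx₀ : x₀ ∈ u) {σ ε D : ℝ} (hσ : σ < 1) (hε : 0 < ε) (hD : 0 ≤ D) :
    ∃ δ > 0, ∀ x ∈ s, ∀ v ∈ s, IsMinOn (fun w => ⟪gradient f x, w⟫ + g w) s v →
      ‖v - x‖ ≤ D → ε ≤ FWgap f g s x → dist x x₀ < δ → ∀ τ ∈ Icc 0 δ,
      f (x + τ • (v - x)) + g (x + τ • (v - x)) ≤ f x + g x - σ * τ * FWgap f g s x := by
  set η := (1 - σ) * ε / (D + 1)
  have hη : 0 < η := div_pos (mul_pos (by linarith) hε) (by linarith)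
  have hηD : η * D ≤ (1 - σ) * ε := by
    rw [div_mul_eq_mul_div, div_le_iff₀ (by linarith)]
    nlinarith [mul_pos (sub_pos.2 hσ) hε]
  obtain ⟨δ', hδ', hrem⟩ := hf.exists_ball_norm_sub_sub_fderiv_le hu hx₀ hη
  refine ⟨min 1 (δ' / (D + 1)), lt_min one_pos (div_pos hδ' (by linarith)),
    fun x hx v hv hmin hvx hεG hxx₀ τ ⟨hτ0, hτδ⟩ => ?_⟩
  have hδD : min 1 (δ' / (D + 1)) * (D + 1) ≤ δ' :=
    (le_div_iff₀ (by linarith)).1 (min_le_right _ _)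
  have hτv : ‖τ • (v - x)‖ ≤ τ * D := by
    rw [norm_smul, Real.norm_of_nonneg hτ0]
    exact mul_le_mul_of_nonneg_left hvx hτ0
  have hx_ball : x ∈ ball x₀ δ' := by
    rw [mem_ball]; nlinarith [min_le_left 1 (δ' / (D + 1))]
  have hy_ball : x + τ • (v - x) ∈ ball x₀ δ' := by
    rw [mem_ball]
    calc dist (x + τ • (v - x)) x₀ ≤ dist x x₀ + ‖τ • (v - x)‖ := by
          rw [dist_eq_norm, dist_eq_norm, add_sub_right_comm]; exact norm_add_le _ _
      _ < δ' := by nlinarith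
  have hremx := hrem x hx_ball _ hy_ball
  rw [add_sub_cancel_left] at hremx
  have hstep := add_smul_sub_le_sub_mul_FWgap (f := f) hg hx hv hmin hτ0
    (hτδ.trans (min_le_left _ _))
  have hrem_le : η * ‖τ • (v - x)‖ ≤ τ * ((1 - σ) * FWgap f g s x) := calc
    η * ‖τ • (v - x)‖ ≤ η * (τ * D) := mul_le_mul_of_nonneg_left hτv hη.le
    _ = τ * (η * D) := by ring
    _ ≤ τ * ((1 - σ) * ε) := mul_le_mul_of_nonneg_left hηD hτ0
    _ ≤ τ * ((1 - σ) * FWgap f g s x) :=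
      mul_le_mul_of_nonneg_left (mul_le_mul_of_nonneg_left hεG (by linarith)) hτ0
  linarith [(le_abs_self _).trans (Real.norm_eq_abs _ ▸ hremx)]

end LineSearch

section Stationarity

variable {E : Type*} [NormedAddCommGroup E] [InnerProductSpace ℝ E] [CompleteSpace E]
  {s u : Set E} {f g : E → ℝ}

lemma exists_norm_sub_le_of_tendsto (hgs : SupercoerciveOn g s) {w₀ : E} (hw₀ : w₀ ∈ s)
    (hf : ContDiffOn ℝ 1 f u) (hu : IsOpen u) {x₀ : E} (hx₀ : x₀ ∈ u) {y w : ℕ → E}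
    (hlim : Tendsto y atTop (𝓝 x₀)) (hw : ∀ k, w k ∈ s)
    (hmin : ∀ k, IsMinOn (fun z => ⟪gradient f (y k), z⟫ + g z) s (w k)) :
    ∃ D, ∀ k, ‖w k - y k‖ ≤ D := by
  have hgrad : Tendsto (fun k => gradient f (y k)) atTop (𝓝 (gradient f x₀)) :=
    ((InnerProductSpace.toDual ℝ E).symm.continuous.tendsto _).comp
      (((hf.continuousOn_fderiv_of_isOpen hu le_rfl).continuousAt
        (hu.mem_nhds hx₀)).tendsto.comp hlim)
  obtain ⟨A, hA⟩ := hgrad.norm.bddAbove_range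
  obtain ⟨B, hB⟩ := hgs.exists_norm_le_of_isMinOn hw₀ A
  obtain ⟨C, hC⟩ := hlim.norm.bddAbove_range
  exact ⟨B + C, fun k => (norm_sub_le _ _).trans
    (add_le_add (hB _ _ (hA (mem_range_self k)) (hw k) (hmin k)) (hC (mem_range_self k)))⟩

lemma exists_FWgap_lt_of_tendsto (hs : IsClosed s) (hsu : s ⊆ u) (hu : IsOpen u)
    (hf : ContDiffOn ℝ 1 f u) (hg : ConvexOn ℝ s g) (hgs : SupercoerciveOn g s) {w₀ : E}
    (hw₀ : w₀ ∈ s) {β σ : ℝ} (hβ : β ∈ Ioo 0 1) (hσ : σ < 1) {y w : ℕ → E} {n : ℕ → ℕ} {x₀ : E}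
    (hy : ∀ k, y k ∈ s) (hw : ∀ k, w k ∈ s)
    (hmin : ∀ k, IsMinOn (fun z => ⟪gradient f (y k), z⟫ + g z) s (w k))
    (hfail : ∀ k, ∀ j < n k, f (y k) + g (y k) - σ * β ^ j * FWgap f g s (y k)
      < f (y k + β ^ j • (w k - y k)) + g (y k + β ^ j • (w k - y k)))
    (hlim : Tendsto y atTop (𝓝 x₀))
    (hstep : Tendsto (fun k => β ^ n k * FWgap f g s (y k)) atTop (𝓝 0)) {ε : ℝ} (hε : 0 < ε) :
    ∃ k, FWgap f g s (y k) < ε := by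
  have hx₀ : x₀ ∈ u := hsu (hs.mem_of_tendsto hlim (Eventually.of_forall hy))
  obtain ⟨D, hD⟩ := exists_norm_sub_le_of_tendsto hgs hw₀ hf hu hx₀ hlim hw hmin
  obtain ⟨δ, hδ, harmijo⟩ :=
    exists_armijo_of_le_FWgap hg hf hu hx₀ hσ hε ((norm_nonneg _).trans (hD 0))
  by_contra! hG
  have hpow : Tendsto (fun k => β ^ n k) atTop (𝓝 0) :=
    squeeze_zero (g := fun k => ε⁻¹ * (β ^ n k * FWgap f g s (y k)))
      (fun k => pow_nonneg hβ.1.le _)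
      (fun k => (le_inv_mul_iff₀ hε).2 (by nlinarith [hG k, pow_nonneg hβ.1.le (n k)]))
      (by simpa using hstep.const_mul ε⁻¹)
  obtain ⟨k, hk1, hkδ, hkx⟩ := ((hpow.eventually (gt_mem_nhds hβ.1)).and
    ((hpow.eventually (gt_mem_nhds (mul_pos hβ.1 hδ))).and
      (hlim.eventually (ball_mem_nhds x₀ hδ)))).exists
  have hn : 1 ≤ n k := Nat.one_le_iff_ne_zero.2 fun h => by
    rw [h, pow_zero] at hk1; linarith [hβ.2]
  have hτ : β * β ^ (n k - 1) = β ^ n k := by rw [← pow_succ', Nat.sub_add_cancel hn]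
  have hτδ : β ^ (n k - 1) ≤ δ := (lt_of_mul_lt_mul_left (hτ ▸ hkδ) hβ.1.le).le
  exact (hfail k (n k - 1) (by omega)).not_ge (harmijo (y k) (hy k) (w k) (hw k) (hmin k)
    (hD k) (hG k) hkx _ ⟨pow_nonneg hβ.1.le _, hτδ⟩)

end Stationarity

theorem alg1_min_FWgap_tendsto_zero_general
    {E : Type*} [NormedAddCommGroup E] [InnerProductSpace ℝ E] [FiniteDimensional ℝ E]
    (s : Set E) (hs_cl : IsClosed s) (hs_cv : Convex ℝ s)
    (g : E → ℝ) (hg_cv : ConvexOn ℝ s g)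
    (hg_sc : ∀ M : ℝ, ∃ R : ℝ, ∀ z ∈ s, R ≤ ‖z‖ → M ≤ g z / ‖z‖)
    (f : E → ℝ) (hf : ∃ u : Set E, IsOpen u ∧ s ⊆ u ∧ ContDiffOn ℝ 1 f u)
    (hF_bdd : BddBelow ((fun z => f z + g z) '' s))
    (β σ p : ℝ) (hβ : β ∈ Set.Ioo (0 : ℝ) 1) (hσ : σ ∈ Set.Ioo (0 : ℝ) 1)
    (hp : p ∈ Set.Ioc (0 : ℝ) 1)
    (x v d : ℕ → E) (ik : ℕ → ℕ) (Fs ps : ℕ → ℝ)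
    (hx0 : x 0 ∈ s)
    (hv : ∀ k, v k ∈ s ∧ ∀ w ∈ s,
      ⟪gradient f (x k), v k⟫ + g (v k) ≤ ⟪gradient f (x k), w⟫ + g w)
    (hd : ∀ k, d k = v k - x k)
    (hik : ∀ k,
      (f (x k + β ^ ik k • d k) + g (x k + β ^ ik k • d k)
          ≤ Fs k - σ * β ^ ik k * FWgap f g s (x k))
      ∧ ∀ j < ik k,
        ¬ (f (x k + β ^ j • d k) + g (x k + β ^ j • d k)
          ≤ Fs k - σ * β ^ j * FWgap f g s (x k)))
    (hxsucc : ∀ k, x (k + 1) = x k + β ^ ik k • d k)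
    (hF0 : Fs 0 = f (x 0) + g (x 0))
    (hps : ∀ k, ps (k + 1) ∈ Set.Icc p 1)
    (hFsucc : ∀ k, Fs (k + 1)
      = ps (k + 1) * (f (x (k + 1)) + g (x (k + 1))) + (1 - ps (k + 1)) * Fs k)
    (hacc : ∃ xstar : E, ∃ φ : ℕ → ℕ, StrictMono φ ∧
      Filter.Tendsto (fun k => x (φ k)) Filter.atTop (nhds xstar)) :
    Filter.Tendsto
      (fun k => (Finset.range (k + 1)).inf' ⟨0, Finset.mem_range.mpr (Nat.succ_pos k)⟩
        (fun l => FWgap f g s (x l)))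
      Filter.atTop (nhds 0) := by
  obtain ⟨u, hu, hsu, hf⟩ := hf
  obtain ⟨x₀, φ, hφ, hlim⟩ := hacc
  obtain rfl : d = fun k => v k - x k := funext hd
  have hmin k : IsMinOn (fun w => ⟪gradient f (x k), w⟫ + g w) s (v k) := isMinOn_iff.2 (hv k).2
  have hxs : ∀ k, x k ∈ s := hs_cv.mem_of_succ_eq_add_smul_sub hx0 (fun k => (hv k).1)
    (fun k => ⟨pow_nonneg hβ.1.le _, pow_le_one₀ hβ.1.le hβ.2.le⟩) hxsucc
  have hG k : 0 ≤ FWgap f g s (x k) := FWgap_nonneg_of_isMinOn (hxs k) (hv k).1 (hmin k)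
  have hc k : 0 ≤ σ * β ^ ik k * FWgap f g s (x k) :=
    mul_nonneg (mul_nonneg hσ.1.le (pow_nonneg hβ.1.le _)) (hG k)
  have hdesc k : f (x (k + 1)) + g (x (k + 1)) ≤ Fs k - σ * β ^ ik k * FWgap f g s (x k) := by
    rw [hxsucc]; exact (hik k).1
  have hFx := le_of_nonmonotone_reference (a := fun k => f (x k) + g (x k)) hc hdesc hF0
    (fun k => (hps k).2) hFsucc
  have hreject k : ∀ j < ik k, f (x k) + g (x k) - σ * β ^ j * FWgap f g s (x k)
      < f (x k + β ^ j • (v k - x k)) + g (x k + β ^ j • (v k - x k)) := fun j hj =>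
    (not_le.1 ((hik k).2 j hj)).trans_le' (by linarith [hFx k])
  have hstep : Tendsto (fun k => β ^ ik k * FWgap f g s (x k)) atTop (𝓝 0) := by
    have := (tendsto_zero_of_nonmonotone_reference (a := fun k => f (x k) + g (x k)) hp.1 hc
      (hF_bdd.mono (range_subset_iff.2 fun k => mem_image_of_mem _ (hxs k)))
      hdesc hF0 hps hFsucc).const_mul σ⁻¹
    simpa [← mul_assoc, hσ.1.ne'] using this
  refine tendsto_inf'_range_nhds_zero hG fun ε hε => ?_
  obtain ⟨j, hj⟩ := exists_FWgap_lt_of_tendsto hs_cl hsu hu hf hg_cv hg_sc hx0 hβ hσ.2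
    (fun j => hxs (φ j)) (fun j => (hv (φ j)).1) (fun j => hmin (φ j)) (fun j => hreject (φ j))
    hlim (hstep.comp hφ.tendsto_atTop) hε
  exact ⟨φ j, hj⟩

/-- **Corollary.** If the sequence `{x^k}` generated by Algorithm 1 has
at least one accumulation point, then `lim_{k→∞} min_{0 ≤ l ≤ k} G(x^l) = 0`. -/
theorem alg1_min_FWgap_tendsto_zero
    {E : Type*} [NormedAddCommGroup E] [InnerProductSpace ℝ E] [FiniteDimensional ℝ E]
    (s : Set E) (hs_ne : s.Nonempty) (hs_cl : IsClosed s) (hs_cv : Convex ℝ s)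
    (g : E → ℝ) (hg_cv : ConvexOn ℝ s g) (hg_lsc : LowerSemicontinuousOn g s)
    (hg_sc : ∀ M : ℝ, ∃ R : ℝ, ∀ z ∈ s, R ≤ ‖z‖ → M ≤ g z / ‖z‖)
    (f : E → ℝ) (hf : ∃ u : Set E, IsOpen u ∧ s ⊆ u ∧ ContDiffOn ℝ 1 f u)
    (hF_bdd : BddBelow ((fun z => f z + g z) '' s))
    (β σ p : ℝ) (hβ : β ∈ Set.Ioo (0 : ℝ) 1) (hσ : σ ∈ Set.Ioo (0 : ℝ) 1)
    (hp : p ∈ Set.Ioc (0 : ℝ) 1)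
    (x v d : ℕ → E) (ik : ℕ → ℕ) (Fs ps : ℕ → ℝ)
    (hx0 : x 0 ∈ s)
    (hv : ∀ k, v k ∈ s ∧ ∀ w ∈ s,
      ⟪gradient f (x k), v k⟫ + g (v k) ≤ ⟪gradient f (x k), w⟫ + g w)
    (hd : ∀ k, d k = v k - x k)
    (hik : ∀ k,
      (f (x k + β ^ ik k • d k) + g (x k + β ^ ik k • d k)
          ≤ Fs k - σ * β ^ ik k * FWgap f g s (x k))
      ∧ ∀ j < ik k,
        ¬ (f (x k + β ^ j • d k) + g (x k + β ^ j • d k)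
          ≤ Fs k - σ * β ^ j * FWgap f g s (x k)))
    (hxsucc : ∀ k, x (k + 1) = x k + β ^ ik k • d k)
    (hF0 : Fs 0 = f (x 0) + g (x 0))
    (hps : ∀ k, ps (k + 1) ∈ Set.Icc p 1)
    (hFsucc : ∀ k, Fs (k + 1)
      = ps (k + 1) * (f (x (k + 1)) + g (x (k + 1))) + (1 - ps (k + 1)) * Fs k)
    (hacc : ∃ xstar : E, ∃ φ : ℕ → ℕ, StrictMono φ ∧
      Filter.Tendsto (fun k => x (φ k)) Filter.atTop (nhds xstar)) :
    Filter.Tendsto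
      (fun k => (Finset.range (k + 1)).inf' ⟨0, Finset.mem_range.mpr (Nat.succ_pos k)⟩
        (fun l => FWgap f g s (x l)))
      Filter.atTop (nhds 0) :=
  alg1_min_FWgap_tendsto_zero_general s hs_cl hs_cv g hg_cv hg_sc f hf hF_bdd β σ p hβ hσ hp x v d
    ik Fs ps hx0 hv hd hik hxsucc hF0 hps hFsucc hacc
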